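/- Let A ∈ 𝓑 and suppose there exist a measurable function V : S → [0,∞) and a constant c > 0 such that ∫_S V(y) P(x,dy) ≤ V(x) − c for all x ∉ A. Then for every x ∉ A, 𝔼^x(T_A) ≤ V(x)/c; in particular ℙ^x(T_A < ∞) = 1 for all x ∉ A. -/

import Mathlib

open MeasureTheory ProbabilityTheory
open scoped ENNReal NNReal

noncomputable section

/-- The hitting time `T_A = inf {n ≥ 1 : ω n ∈ A}`, with value `⊤ : ℕ∞` if no such `n` exists. -/
def hitTime {S : Type*} (A : Set S) (ω : ℕ → S) : ℕ∞ :=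
  sInf ((fun k : ℕ => (k : ℕ∞)) '' {k : ℕ | 1 ≤ k ∧ ω k ∈ A})

/-- `IsMarkovPath K μ₀ L` says that `L` is the law on path space `ℕ → E` of the
time-homogeneous Markov chain with transition kernel `K` and initial distribution `μ₀`
(the measure produced by the Ionescu–Tulcea construction), characterized through its
finite-dimensional distributions. -/
def IsMarkovPath {E : Type*} [MeasurableSpace E] (K : Kernel E E) (μ₀ : Measure E)
    (L : Measure (ℕ → E)) : Prop :=
  IsProbabilityMeasure L ∧
    L.map (fun ω => ω 0) = μ₀ ∧
    ∀ n : ℕ,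
      L.map (fun ω => fun i : Fin (n + 2) => ω (i : ℕ)) =
        (L.map (fun ω => fun i : Fin (n + 1) => ω (i : ℕ))).bind
          (fun v => (K (v (Fin.last n))).map (Fin.snoc v))


/-!
Along the chain, `V (X_n)` restricted to the event that `X_0, …, X_n` all avoid `A` loses at
least `c · ℙ(X_0, …, X_n avoid A)` in expectation at each step, by the drift condition. Telescoping
gives `c · ∑ₙ ℙ(X_0, …, X_n avoid A) ≤ V x`, and for `x ∉ A` the left side dominates
`c · ∑ₙ ℙ(T_A > n) = c · 𝔼^x T_A`. A hitting time of finite expectation is finite almost surely.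
Since the path law is only specified through its finite-dimensional marginals, the one-step
estimate is proved for the laws of the prefixes `(X_0, …, X_n)`.
-/

lemma ENat.toENNReal_eq_tsum_indicator (a : ℕ∞) :
    (a : ℝ≥0∞) = ∑' n : ℕ, {n : ℕ | (n : ℕ∞) < a}.indicator 1 n := by
  rw [← tsum_subtype]
  simp only [Pi.one_apply]
  rw [ENNReal.tsum_set_one]
  induction a with
  | top => simp
  | coe m => simp [Set.encard_eq_coe_toFinset_card]

lemma ENNReal.tsum_le_of_add_le {a b : ℕ → ℝ≥0∞} (h : ∀ n, a (n + 1) + b n ≤ a n) :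
    ∑' n, b n ≤ a 0 := by
  have partial_sums : ∀ N, ∑ k ∈ Finset.range N, b k + a N ≤ a 0 := by
    intro N
    induction N with
    | zero => simp
    | succ N ih =>
      calc ∑ k ∈ Finset.range (N + 1), b k + a (N + 1)
          = ∑ k ∈ Finset.range N, b k + (a (N + 1) + b N) := by
            rw [Finset.sum_range_succ]; ring
        _ ≤ ∑ k ∈ Finset.range N, b k + a N := by gcongr; exact h N
        _ ≤ a 0 := ih
  exact ENNReal.tsum_le_of_sum_range_le fun N => le_self_add.trans (partial_sums N)

section HittingTime

variable {S : Type*} {A : Set S}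

lemma lt_hitTime_iff {ω : ℕ → S} {n : ℕ} :
    (n : ℕ∞) < hitTime A ω ↔ ∀ k, 1 ≤ k → k ≤ n → ω k ∉ A := by
  rw [← ENat.add_one_le_iff (ENat.natCast_ne_top n), hitTime, le_sInf_iff]
  simp only [Set.forall_mem_image, Set.mem_ofPred_eq]
  norm_cast
  grind

lemma measurableSet_lt_hitTime [MeasurableSpace S] (hA : MeasurableSet A) (n : ℕ) :
    MeasurableSet {ω : ℕ → S | (n : ℕ∞) < hitTime A ω} := by
  simp_rw [lt_hitTime_iff, Set.ofPred_forall]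
  exact .iInter fun k => .iInter fun _ => .iInter fun _ =>
    hA.compl.preimage (measurable_pi_apply k)

lemma hitTime_eq_tsum_indicator (ω : ℕ → S) :
    (hitTime A ω : ℝ≥0∞) = ∑' n : ℕ, {ω | (n : ℕ∞) < hitTime A ω}.indicator 1 ω := by
  rw [ENat.toENNReal_eq_tsum_indicator]
  rfl

lemma measurable_hitTime [MeasurableSpace S] (hA : MeasurableSet A) :
    Measurable fun ω : ℕ → S => (hitTime A ω : ℝ≥0∞) := by
  simp_rw [hitTime_eq_tsum_indicator]
  exact Measurable.tsum fun n => measurable_one.indicator (measurableSet_lt_hitTime hA n)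

lemma lintegral_hitTime [MeasurableSpace S] (hA : MeasurableSet A) (μ : Measure (ℕ → S)) :
    ∫⁻ ω, (hitTime A ω : ℝ≥0∞) ∂μ = ∑' n : ℕ, μ {ω | (n : ℕ∞) < hitTime A ω} := by
  simp_rw [hitTime_eq_tsum_indicator]
  rw [lintegral_tsum fun n =>
    (measurable_one.indicator (measurableSet_lt_hitTime hA n)).aemeasurable]
  simp_rw [lintegral_indicator_one (measurableSet_lt_hitTime hA _)]

lemma measure_hitTime_lt_top [MeasurableSpace S] (hA : MeasurableSet A) (μ : Measure (ℕ → S))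
    [IsProbabilityMeasure μ] (h : ∫⁻ ω, (hitTime A ω : ℝ≥0∞) ∂μ ≠ ∞) :
    μ {ω | hitTime A ω < ⊤} = 1 := by
  have hae : ∀ᵐ ω ∂μ, hitTime A ω < ⊤ := by
    filter_upwards [ae_lt_top (measurable_hitTime hA) h] with ω hω
    simpa using hω
  rw [measure_congr (s := {ω | hitTime A ω < ⊤}) (ae_eq_univ.2 (ae_iff.1 hae)), measure_univ]

end HittingTime

section MarkovChain

variable {S : Type*} [MeasurableSpace S]

def pathPrefix (n : ℕ) (ω : ℕ → S) : Fin (n + 1) → S := fun i => ω i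

omit [MeasurableSpace S] in
lemma pathPrefix_zero (ω : ℕ → S) : pathPrefix 0 ω = fun _ => ω 0 := by
  funext i
  rw [Fin.fin_one_eq_zero i]
  rfl

lemma measurable_pathPrefix (n : ℕ) : Measurable (pathPrefix (S := S) n) :=
  measurable_pi_lambda _ fun _ => measurable_pi_apply _

def avoidingPaths (A : Set S) (n : ℕ) : Set (Fin (n + 1) → S) := Set.univ.pi fun _ => Aᶜ

lemma measurableSet_avoidingPaths {A : Set S} (hA : MeasurableSet A) (n : ℕ) :
    MeasurableSet (avoidingPaths A n) :=
  .univ_pi fun _ => hA.compl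

omit [MeasurableSpace S] in
lemma snoc_mem_avoidingPaths {A : Set S} {n : ℕ} {v : Fin (n + 1) → S} {y : S} :
    (Fin.snoc v y : Fin (n + 2) → S) ∈ avoidingPaths A (n + 1) ↔
      v ∈ avoidingPaths A n ∧ y ∉ A := by
  simp [avoidingPaths, Fin.forall_fin_succ']

def valueWhileAvoiding (A : Set S) (V : S → ℝ≥0∞) (n : ℕ) (v : Fin (n + 1) → S) : ℝ≥0∞ :=
  (avoidingPaths A n).indicator (fun v => V (v (Fin.last n))) v

lemma measurable_valueWhileAvoiding {A : Set S} (hA : MeasurableSet A) {V : S → ℝ≥0∞}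
    (hV : Measurable V) (n : ℕ) : Measurable (valueWhileAvoiding A V n) :=
  (hV.comp (measurable_pi_apply _)).indicator (measurableSet_avoidingPaths hA n)

lemma measurable_snoc (n : ℕ) :
    Measurable fun p : (Fin (n + 1) → S) × S => (Fin.snoc p.1 p.2 : Fin (n + 2) → S) := by
  refine measurable_pi_lambda _ fun i => ?_
  induction i using Fin.lastCases with
  | last => simpa only [Fin.snoc_last] using measurable_snd
  | cast j =>
    simp only [Fin.snoc_castSucc]
    exact (measurable_pi_apply j).comp measurable_fst

lemma measurable_map_snoc (P : Kernel S S) [IsSFiniteKernel P] (n : ℕ) :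
    Measurable fun v : Fin (n + 1) → S =>
      ((P (v (Fin.last n))).map (Fin.snoc v) : Measure (Fin (n + 2) → S)) := by
  have : (fun v : Fin (n + 1) → S =>
      ((P (v (Fin.last n))).map (Fin.snoc v) : Measure (Fin (n + 2) → S))) =
      ⇑(Kernel.map (Kernel.id ×ₖ P.comap (· (Fin.last n)) (measurable_pi_apply _))
        fun p : (Fin (n + 1) → S) × S => (Fin.snoc p.1 p.2 : Fin (n + 2) → S)) := by
    funext v
    rw [Kernel.map_apply _ (measurable_snoc n), Kernel.prod_apply, Kernel.id_apply,
      Kernel.comap_apply, Measure.dirac_prod,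
      Measure.map_map (measurable_snoc n) measurable_prodMk_left]
    rfl
  rw [this]
  exact Kernel.measurable _

omit [MeasurableSpace S] in
lemma valueWhileAvoiding_snoc_le {A : Set S} {V : S → ℝ≥0∞} {n : ℕ} (v : Fin (n + 1) → S)
    (y : S) :
    valueWhileAvoiding A V (n + 1) (Fin.snoc v y) ≤
      (avoidingPaths A n).indicator (fun _ => V y) v := by
  by_cases hv : v ∈ avoidingPaths A n
  · rw [Set.indicator_of_mem hv, valueWhileAvoiding]
    exact (Set.indicator_le_self _ _ _).trans_eq (by rw [Fin.snoc_last])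
  · have : (Fin.snoc v y : Fin (n + 2) → S) ∉ avoidingPaths A (n + 1) := by
      rw [snoc_mem_avoidingPaths]; tauto
    simp [valueWhileAvoiding, Set.indicator_of_notMem this, Set.indicator_of_notMem hv]

lemma lintegral_valueWhileAvoiding_bind_add_le (P : Kernel S S) [IsSFiniteKernel P]
    {A : Set S} (hA : MeasurableSet A) {V : S → ℝ≥0∞} (hV : Measurable V) {c : ℝ≥0∞}
    (hdrift : ∀ x ∉ A, ∫⁻ y, V y ∂P x + c ≤ V x) {n : ℕ} (ν : Measure (Fin (n + 1) → S)) :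
    ∫⁻ w, valueWhileAvoiding A V (n + 1) w
        ∂ν.bind (fun v => (P (v (Fin.last n))).map (Fin.snoc v)) + c * ν (avoidingPaths A n) ≤
      ∫⁻ v, valueWhileAvoiding A V n v ∂ν := by
  rw [Measure.lintegral_bind (measurable_map_snoc P n).aemeasurable
      (measurable_valueWhileAvoiding hA hV _).aemeasurable,
    ← lintegral_indicator_const (measurableSet_avoidingPaths hA n),
    ← lintegral_add_right _ (measurable_const.indicator (measurableSet_avoidingPaths hA n))]
  refine lintegral_mono fun v => ?_
  have hsnoc : Measurable fun y : S => (Fin.snoc v y : Fin (n + 2) → S) :=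
    (measurable_snoc n).comp measurable_prodMk_left
  rw [lintegral_map (measurable_valueWhileAvoiding hA hV _) hsnoc]
  calc ∫⁻ y, valueWhileAvoiding A V (n + 1) (Fin.snoc v y) ∂P (v (Fin.last n)) +
        (avoidingPaths A n).indicator (fun _ => c) v
      ≤ ∫⁻ y, (avoidingPaths A n).indicator (fun _ => V y) v ∂P (v (Fin.last n)) +
        (avoidingPaths A n).indicator (fun _ => c) v := by
        gcongr with y
        exact valueWhileAvoiding_snoc_le v y
    _ ≤ valueWhileAvoiding A V n v := by
        by_cases hv : v ∈ avoidingPaths A n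
        · simp only [Set.indicator_of_mem hv, valueWhileAvoiding]
          exact hdrift _ (hv (Fin.last n) trivial)
        · simp [valueWhileAvoiding, Set.indicator_of_notMem hv]

omit [MeasurableSpace S] in
lemma valueWhileAvoiding_zero (A : Set S) (V : S → ℝ≥0∞) (x : S) :
    valueWhileAvoiding A V 0 (fun _ => x) = Aᶜ.indicator V x := by
  by_cases hx : x ∈ A <;> simp [valueWhileAvoiding, avoidingPaths, hx]

lemma IsMarkovPath.mul_tsum_measure_avoiding_le {P : Kernel S S} [IsSFiniteKernel P]
    {μ₀ : Measure S} {L : Measure (ℕ → S)} (hL : IsMarkovPath P μ₀ L) {A : Set S}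
    (hA : MeasurableSet A) {V : S → ℝ≥0∞} (hV : Measurable V) {c : ℝ≥0∞}
    (hdrift : ∀ x ∉ A, ∫⁻ y, V y ∂P x + c ≤ V x) :
    c * ∑' n, L (pathPrefix n ⁻¹' avoidingPaths A n) ≤ ∫⁻ x, Aᶜ.indicator V x ∂μ₀ := by
  set a : ℕ → ℝ≥0∞ := fun n => ∫⁻ v, valueWhileAvoiding A V n v ∂L.map (pathPrefix n)
  have step : ∀ n, a (n + 1) + c * L (pathPrefix n ⁻¹' avoidingPaths A n) ≤ a n := by
    intro n
    rw [← Measure.map_apply (measurable_pathPrefix n) (measurableSet_avoidingPaths hA n)]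
    have hbind : L.map (pathPrefix (n + 1)) = _ := hL.2.2 n
    simp only [a, hbind]
    exact lintegral_valueWhileAvoiding_bind_add_le P hA hV hdrift _
  have start : a 0 = ∫⁻ x, Aᶜ.indicator V x ∂μ₀ := by
    rw [show a 0 = _ from lintegral_map (measurable_valueWhileAvoiding hA hV 0)
      (measurable_pathPrefix 0)]
    simp only [pathPrefix_zero, valueWhileAvoiding_zero]
    rw [← hL.2.1, lintegral_map (hV.indicator hA.compl) (measurable_pi_apply 0)]
  rw [← ENNReal.tsum_mul_left, ← start]
  exact ENNReal.tsum_le_of_add_le step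

lemma measure_lt_hitTime_le (μ : Measure (ℕ → S)) (A : Set S) (n : ℕ) :
    μ {ω | (n : ℕ∞) < hitTime A ω} ≤
      μ (pathPrefix n ⁻¹' avoidingPaths A n) + μ ((· 0) ⁻¹' A) := by
  refine (measure_mono fun ω hω => ?_).trans (measure_union_le _ _)
  by_cases h0 : ω 0 ∈ A
  · exact Or.inr h0
  · refine Or.inl fun i _ => ?_
    rcases Nat.eq_zero_or_pos i with hi | hi
    · simpa [pathPrefix, hi] using h0
    · exact lt_hitTime_iff.mp hω i hi (Nat.lt_succ_iff.mp i.isLt)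

end MarkovChain

theorem hitting_time_bound_of_drift_general
    {S : Type*} [MeasurableSpace S]
    (P : Kernel S S) [IsMarkovKernel P]
    (Pr : S → Measure (ℕ → S))
    (hPr : ∀ x : S, IsMarkovPath P (Measure.dirac x) (Pr x))
    (A : Set S) (hA : MeasurableSet A)
    (V : S → ℝ≥0∞) (hVmeas : Measurable V) (hVfin : ∀ x, V x ≠ ⊤)
    (c : ℝ≥0) (hc : 0 < c)
    (hdrift : ∀ x ∉ A, (∫⁻ y, V y ∂(P x)) + (c : ℝ≥0∞) ≤ V x) :
    ∀ x ∉ A,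
      (∫⁻ ω, (hitTime A ω : ℝ≥0∞) ∂(Pr x)) ≤ V x / (c : ℝ≥0∞) ∧
      Pr x {ω | hitTime A ω < ⊤} = 1 := by
  intro x hx
  have : IsProbabilityMeasure (Pr x) := (hPr x).1
  have start_outside : Pr x ((· 0) ⁻¹' A) = 0 := by
    rw [← Measure.map_apply (measurable_pi_apply 0) hA, (hPr x).2.1, Measure.dirac_apply' x hA,
      Set.indicator_of_notMem hx]
  have tail_bound : c * ∑' n : ℕ, Pr x {ω | (n : ℕ∞) < hitTime A ω} ≤ V x := by
    calc c * ∑' n : ℕ, Pr x {ω | (n : ℕ∞) < hitTime A ω}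
        ≤ c * ∑' n, Pr x (pathPrefix n ⁻¹' avoidingPaths A n) := by
          gcongr (c : ℝ≥0∞) * ?_
          exact ENNReal.tsum_le_tsum fun n => by
            simpa [start_outside] using measure_lt_hitTime_le (Pr x) A n
      _ ≤ ∫⁻ y, Aᶜ.indicator V y ∂Measure.dirac x :=
          (hPr x).mul_tsum_measure_avoiding_le hA hVmeas hdrift
      _ = V x := by
          rw [lintegral_dirac' _ (hVmeas.indicator hA.compl), Set.indicator_of_mem hx]
  have hc' : (c : ℝ≥0∞) ≠ 0 := by exact_mod_cast hc.ne'
  have expectation_bound : ∫⁻ ω, (hitTime A ω : ℝ≥0∞) ∂Pr x ≤ V x / c := by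
    rw [lintegral_hitTime hA, ENNReal.le_div_iff_mul_le (.inl hc') (.inl ENNReal.coe_ne_top),
      mul_comm]
    exact tail_bound
  exact ⟨expectation_bound, measure_hitTime_lt_top hA _
    (expectation_bound.trans_lt (ENNReal.div_lt_top (hVfin x) hc')).ne⟩

/-- Under the drift condition `PV ≤ V − c` off `A`, the hitting time of `A` from `x ∉ A`
satisfies `𝔼^x (T_A) ≤ V (x) / c`; in particular it is almost surely finite. -/
theorem hitting_time_bound_of_drift
    {S : Type*} [MeasurableSpace S] [MeasurableSpace.CountablyGenerated S]
    (P : Kernel S S) [IsMarkovKernel P]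
    (Pr : S → Measure (ℕ → S))
    (hPr : ∀ x : S, IsMarkovPath P (Measure.dirac x) (Pr x))
    (A : Set S) (hA : MeasurableSet A)
    (V : S → ℝ≥0∞) (hVmeas : Measurable V) (hVfin : ∀ x, V x ≠ ⊤)
    (c : ℝ≥0) (hc : 0 < c)
    (hdrift : ∀ x ∉ A, (∫⁻ y, V y ∂(P x)) + (c : ℝ≥0∞) ≤ V x) :
    ∀ x ∉ A,
      (∫⁻ ω, (hitTime A ω : ℝ≥0∞) ∂(Pr x)) ≤ V x / (c : ℝ≥0∞) ∧
      Pr x {ω | hitTime A ω < ⊤} = 1 :=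
  hitting_time_bound_of_drift_general P Pr hPr A hA V hVmeas hVfin c hc hdrift
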